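/- arXiv:1910.12226 — 5 statements merged into one kernel-verified Lean document; each statement's English description precedes it below -/
import Mathlib

section
/- (Čencov's theorem) For each n ∈ ℕ let A_n be a continuous symmetric (0,2)-tensor field on P_n. Assume that for any n, N ∈ ℕ with n ≤ N and each Markov embedding F : P_n → P_N, the pullback of A_N by F equals A_n. Then there exists λ ∈ ℝ such that A_n = λ g_n^F for every n ∈ ℕ. -/
open Finset

noncomputable section

/-- `Psim n` is the space `P_n` of positive probability measures on
`Ω_{n+1} = {1,…,n+1}`, viewed as a subset of `ℝ^{n+1}`. -/
def Psim (n : ℕ) : Set (Fin (n + 1) → ℝ) :=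
  {p | (∀ i, p i ∈ Set.Ioo (0 : ℝ) 1) ∧ ∑ i, p i = 1}

/-- The tangent space of `P_n` (at any point): vectors in `ℝ^{n+1}` whose
coordinates sum to zero. -/
def Tang (n : ℕ) : Set (Fin (n + 1) → ℝ) :=
  {X | ∑ i, X i = 0}

/-- `B` is a symmetric bilinear form on `ℝ^{n+1}` (the value of a symmetric
`(0,2)`-tensor field at a point). -/
def IsSymmBilin {n : ℕ} (B : (Fin (n + 1) → ℝ) → (Fin (n + 1) → ℝ) → ℝ) : Prop :=
  (∀ X Y, B X Y = B Y X) ∧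
  (∀ (c : ℝ) (X X' Y : Fin (n + 1) → ℝ), B (c • X + X') Y = c * B X Y + B X' Y)

/-- `A` is a family of symmetric `(0,2)`-tensor fields `A_n` on `P_n`
(indices `n ≥ 1`, matching the paper's `ℕ = {1,2,…}`). -/
def SymmTF (A : (n : ℕ) → (Fin (n + 1) → ℝ) → (Fin (n + 1) → ℝ) → (Fin (n + 1) → ℝ) → ℝ) :
    Prop :=
  ∀ n : ℕ, 0 < n → ∀ p ∈ Psim n, IsSymmBilin (A n p)

/-- The scalar patched Markov embedding `G_n^{α,σ} : P_n → P_{n+1}`,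
`G_n^{α,σ}(p) = α ∑_{i ∈ Ω_{n+1}} p(i) δ_{σ(i)} + (1-α) δ_{σ(n+2)}`. -/
def sPatch (n : ℕ) (α : ℝ) (σ : Equiv.Perm (Fin (n + 2))) (p : Fin (n + 1) → ℝ) :
    Fin (n + 2) → ℝ := fun I =>
  α * ∑ i : Fin (n + 1), p i * (if σ i.castSucc = I then 1 else 0) +
    (1 - α) * (if σ (Fin.last (n + 1)) = I then 1 else 0)

/-- The differential of `G_n^{α,σ}`: `dG(X) = α ∑_i X^i δ_{σ(i)}`. -/
def sPatchD (n : ℕ) (α : ℝ) (σ : Equiv.Perm (Fin (n + 2))) (X : Fin (n + 1) → ℝ) :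
    Fin (n + 2) → ℝ := fun I =>
  α * ∑ i : Fin (n + 1), X i * (if σ i.castSucc = I then 1 else 0)

/-- A general patched Markov embedding `G_n : P_n → P_{n+1}` with weights `a_i`:
`G_n(p) = ∑_i p(i) (a_i δ_{σ(i)} + (1-a_i) δ_{σ(n+2)})`. -/
def patch (n : ℕ) (a : Fin (n + 1) → ℝ) (σ : Equiv.Perm (Fin (n + 2)))
    (p : Fin (n + 1) → ℝ) : Fin (n + 2) → ℝ := fun I =>
  ∑ i : Fin (n + 1), p i * (a i * (if σ i.castSucc = I then 1 else 0) +
    (1 - a i) * (if σ (Fin.last (n + 1)) = I then 1 else 0))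

/-- The differential of a patched Markov embedding. -/
def patchD (n : ℕ) (a : Fin (n + 1) → ℝ) (σ : Equiv.Perm (Fin (n + 2)))
    (X : Fin (n + 1) → ℝ) : Fin (n + 2) → ℝ := fun I =>
  ∑ i : Fin (n + 1), X i * (a i * (if σ i.castSucc = I then 1 else 0) +
    (1 - a i) * (if σ (Fin.last (n + 1)) = I then 1 else 0))

/-- Invariance of the family `{A_n}` under scalar patched Markov embeddings:
the pullback of `A_{n+1}` by each `G_n^{α,σ}` equals `A_n`. -/
def InvariantSP
    (A : (n : ℕ) → (Fin (n + 1) → ℝ) → (Fin (n + 1) → ℝ) → (Fin (n + 1) → ℝ) → ℝ) : Prop :=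
  ∀ n : ℕ, 0 < n → ∀ α ∈ Set.Ioo (0 : ℝ) 1, ∀ σ : Equiv.Perm (Fin (n + 2)),
    ∀ p ∈ Psim n, ∀ X ∈ Tang n, ∀ Y ∈ Tang n,
      A (n + 1) (sPatch n α σ p) (sPatchD n α σ X) (sPatchD n α σ Y) = A n p X Y

/-- The vector field `Z_i^n` on `P_n`, with (constant) coordinates
`e_i - (1/(n+1)) ∑_j e_j`. -/
def Zvec (n : ℕ) (i : Fin (n + 1)) : Fin (n + 1) → ℝ :=
  fun k => (if k = i then 1 else 0) - 1 / (n + 1)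

/-- The uniform probability measure `b_n ∈ P_n`. -/
def bunif (n : ℕ) : Fin (n + 1) → ℝ := fun _ => 1 / (n + 1)

/-- The point `p_u ∈ P_1`: `p_u(1) = u`, `p_u(2) = 1 - u`. -/
def pu (u : ℝ) : Fin 2 → ℝ := ![u, 1 - u]

/-- The tensor field `A_n^d(X,Y)_p = ∑_i X^i Y^i / p(i)²`. -/
def Ad (n : ℕ) (p X Y : Fin (n + 1) → ℝ) : ℝ := ∑ i, X i * Y i / (p i) ^ 2

/-- The tensor field `A_n^s(X,Y)_p = (∑_i X^i/p(i)) (∑_j Y^j/p(j))`. -/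
def As (n : ℕ) (p X Y : Fin (n + 1) → ℝ) : ℝ := (∑ i, X i / p i) * (∑ j, Y j / p j)

/-- The Fisher metric `g_n^F(X,Y)_p = ∑_i X^i Y^i / p(i)`. -/
def Fish (n : ℕ) (p X Y : Fin (n + 1) → ℝ) : ℝ := ∑ i, X i * Y i / p i

/-- The point `ψ_u^σ(α) = G_1^{α,σ}(p_u) ∈ P_2` (the indices `1,2,3` of `Ω_3`
are `0,1,2 : Fin 3`). -/
def psiPt (α u : ℝ) (σ : Equiv.Perm (Fin 3)) : Fin 3 → ℝ := sPatch 1 α σ (pu u)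

/-- `E^k ⊂ TP_2`: the line spanned by `Z_i^2 - Z_j^2 = e_i - e_j` where
`{i,j,k} = {0,1,2}`; equivalently, the sum-zero vectors vanishing at `k`. -/
def Esub (k : Fin 3) : Set (Fin 3 → ℝ) := {W | (∑ i, W i = 0) ∧ W k = 0}

/-- `u_α^{ij}` (formed with `σ = id`). -/
def uRatio (α u : ℝ) (i j : Fin 3) : ℝ :=
  psiPt α u (Equiv.refl (Fin 3)) i /
    (psiPt α u (Equiv.refl (Fin 3)) i + psiPt α u (Equiv.refl (Fin 3)) j)

/-- The image `dH^{ij}_q(Z_1^1) = ((q(i)+q(j))/2) (Z_i^2 - Z_j^2)` of `Z_1^1`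
under the differential of `H_q^{ij} : P_1 → P_2`. -/
def dHvec (q : Fin 3 → ℝ) (i j : Fin 3) : Fin 3 → ℝ :=
  ((q i + q j) / 2) • (Zvec 2 i - Zvec 2 j)

/-- Condition (C1) for `A_2`. -/
def CondC1 (A2 : (Fin 3 → ℝ) → (Fin 3 → ℝ) → (Fin 3 → ℝ) → ℝ) : Prop :=
  ∃ r : ℝ → ℝ, (∀ t : ℝ, 0 < t → 0 < r t) ∧ (∀ t : ℝ, 0 < t → r t * r (1 / t) = 1) ∧
    ∀ α ∈ Set.Ioo (0 : ℝ) 1, ∀ u ∈ Set.Ioo (0 : ℝ) 1, ∀ σ : Equiv.Perm (Fin 3),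
      ∀ W1 W2 W3 : Fin 3 → ℝ, W1 ∈ Esub (σ 0) → W2 ∈ Esub (σ 1) → W3 ∈ Esub (σ 2) →
        W3 = W1 + W2 →
        A2 (psiPt α u σ) W3 W1 = r (u / (1 - u)) * A2 (psiPt α u σ) W3 W2

/-- Condition (C2) for `A_1` and `A_2`: `A_1` is positive semidefinite and
degenerate at `b_1`, and the parallelism identity holds. -/
def CondC2 (A1 : (Fin 2 → ℝ) → (Fin 2 → ℝ) → (Fin 2 → ℝ) → ℝ)
    (A2 : (Fin 3 → ℝ) → (Fin 3 → ℝ) → (Fin 3 → ℝ) → ℝ) : Prop :=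
  (∀ p ∈ Psim 1, ∀ X ∈ Tang 1, 0 ≤ A1 p X X) ∧
  (∃ X ∈ Tang 1, X ≠ 0 ∧ ∀ Y ∈ Tang 1, A1 (bunif 1) X Y = 0) ∧
  (∀ α ∈ Set.Ioo (0 : ℝ) 1, ∀ u ∈ Set.Ioo (0 : ℝ) 1, ∀ σ : Equiv.Perm (Fin 3),
    ∀ i j k l : Fin 3, i ≠ j → k ≠ l →
      A2 (psiPt α u σ) (dHvec (psiPt α u σ) (σ i) (σ j)) (dHvec (psiPt α u σ) (σ k) (σ l)) =
        (Real.sign (2 * uRatio α u i j - 1) *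
            Real.sqrt (A1 (pu (uRatio α u i j)) (Zvec 1 0) (Zvec 1 0))) *
        (Real.sign (2 * uRatio α u k l - 1) *
            Real.sqrt (A1 (pu (uRatio α u k l)) (Zvec 1 0) (Zvec 1 0))))

/-- `H : P_m → P_n` (together with its linear differential `dH`) is a
composition of scalar patched Markov embeddings. -/
inductive IsSPMComp :
    (m n : ℕ) → ((Fin (m + 1) → ℝ) → (Fin (n + 1) → ℝ)) →
      ((Fin (m + 1) → ℝ) → (Fin (n + 1) → ℝ)) → Prop
  | refl (m : ℕ) : IsSPMComp m m id id
  | step {m n : ℕ} {H dH : (Fin (m + 1) → ℝ) → (Fin (n + 1) → ℝ)} (α : ℝ)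
      (hα : α ∈ Set.Ioo (0 : ℝ) 1) (σ : Equiv.Perm (Fin (n + 2)))
      (h : IsSPMComp m n H dH) :
      IsSPMComp m (n + 1) (fun p => sPatch n α σ (H p)) (fun X => sPatchD n α σ (dH X))

/-- `Q` is a Markov partition: each `Q i` is a probability measure on `Ω_{N+1}`
and the supports of the `Q i` are pairwise disjoint with union `Ω_{N+1}`. -/
def IsMarkovPartition {n N : ℕ} (Q : Fin (n + 1) → Fin (N + 1) → ℝ) : Prop :=
  (∀ i, (∀ I, 0 ≤ Q i I) ∧ ∑ I, Q i I = 1) ∧ (∀ I, ∃! i, Q i I ≠ 0)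

/-- The Markov embedding `F(p) = ∑_i p(i) Q_i` induced by `Q` (the same formula
gives its differential on tangent vectors). -/
def mEmb {n N : ℕ} (Q : Fin (n + 1) → Fin (N + 1) → ℝ) (p : Fin (n + 1) → ℝ) :
    Fin (N + 1) → ℝ := fun I => ∑ i, p i * Q i I

/-- `A_n^{λ,μ} = λ A_n^d + μ A_n^s`. -/
def Alm (n : ℕ) (lam mu : ℝ) (p X Y : Fin (n + 1) → ℝ) : ℝ :=
  lam * Ad n p X Y + mu * As n p X Y

/-!
A permutation-invariant symmetric bilinear form on the sum-zero hyperplane is a multiple of the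
dot product, so permutation invariance alone gives `A_N = λ_N g^F` at the uniform point `b_N`.
A surjection `f : Ω_{N+1} → Ω_{n+1}` yields a Markov embedding, uniform on the fibres of `f`,
that sends the image `f_* b_N` to `b_N`; since the Fisher metric is itself Markov invariant, this
transports `A_N = λ_N g^F` to `A_n = λ_N g^F` at `f_* b_N`. Realising `b_1` and `b_N` as images of
`b_{2N+1}` shows `λ_N = λ_1`. The points `f_* b_N` are the rational points of `P_n`, which are
dense, and continuity of `A_n` concludes.
-/

open Filter Topology

namespace IsSymmBilin

variable {n : ℕ} {B : (Fin (n + 1) → ℝ) → (Fin (n + 1) → ℝ) → ℝ}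

theorem apply_zero_left (hB : IsSymmBilin B) (Y : Fin (n + 1) → ℝ) : B 0 Y = 0 := by
  have h := hB.2 1 0 0 Y
  simp only [one_smul, add_zero, one_mul] at h
  linarith

def toBilinForm (hB : IsSymmBilin B) : LinearMap.BilinForm ℝ (Fin (n + 1) → ℝ) :=
  LinearMap.mk₂ ℝ B (fun X X' Y => by simpa using hB.2 1 X X' Y)
    (fun c X Y => by simpa [hB.apply_zero_left] using hB.2 c X 0 Y)
    (fun X Y Y' => by rw [hB.1, hB.1 X Y, hB.1 X Y']; simpa using hB.2 1 Y Y' X)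
    (fun c X Y => by rw [hB.1, hB.1 X Y]; simpa [hB.apply_zero_left] using hB.2 c Y 0 X)

theorem apply_sum_smul_sum_smul (hB : IsSymmBilin B) {ι : Type*} [Fintype ι]
    (x y : ι → ℝ) (v : ι → Fin (n + 1) → ℝ) :
    B (∑ i, x i • v i) (∑ j, y j • v j) = ∑ i, ∑ j, x i * y j * B (v i) (v j) := by
  change hB.toBilinForm _ _ = ∑ i, ∑ j, x i * y j * hB.toBilinForm (v i) (v j)
  simp only [map_sum, map_smul, LinearMap.sum_apply, LinearMap.smul_apply, smul_eq_mul,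
    Finset.mul_sum]
  rw [Finset.sum_comm]
  simp only [mul_left_comm, mul_assoc]

end IsSymmBilin

theorem sum_smul_Zvec {n : ℕ} {X : Fin (n + 1) → ℝ} (hX : X ∈ Tang n) :
    ∑ i, X i • Zvec n i = X := by
  have hX : ∑ i, X i = 0 := hX
  ext k
  simp [Zvec, mul_sub, Finset.sum_sub_distrib, ← Finset.sum_mul, hX]

theorem Zvec_mem_Tang (n : ℕ) (i : Fin (n + 1)) : Zvec n i ∈ Tang n := by
  simp [Tang, Zvec, Finset.sum_sub_distrib]
  field_simp
  ring

theorem Zvec_comp_perm {n : ℕ} (σ : Equiv.Perm (Fin (n + 1))) (i : Fin (n + 1)) :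
    Zvec n i ∘ σ = Zvec n (σ.symm i) := by
  ext k
  simp [Zvec, ← Equiv.eq_symm_apply]

theorem Equiv.Perm.exists_apply_eq_and_apply_eq {α : Type*} [DecidableEq α] {i j k l : α}
    (hij : i ≠ j) (hkl : k ≠ l) : ∃ σ : Equiv.Perm α, σ i = k ∧ σ j = l := by
  set j' := Equiv.swap i k j
  have hj' : j' ≠ k := by simpa [j', Equiv.swap_apply_eq_iff] using hij.symm
  refine ⟨Equiv.swap j' l * Equiv.swap i k, ?_, by simp [j']⟩
  simp [Equiv.swap_apply_of_ne_of_ne hj'.symm hkl]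

theorem IsSymmBilin.exists_eq_mul_dotProduct {n : ℕ}
    {B : (Fin (n + 1) → ℝ) → (Fin (n + 1) → ℝ) → ℝ} (hB : IsSymmBilin B)
    (hperm : ∀ σ : Equiv.Perm (Fin (n + 1)), ∀ X ∈ Tang n, ∀ Y ∈ Tang n,
      B (X ∘ σ) (Y ∘ σ) = B X Y) :
    ∃ c : ℝ, ∀ X ∈ Tang n, ∀ Y ∈ Tang n, B X Y = c * X ⬝ᵥ Y := by
  set a := B (Zvec n 0) (Zvec n 0)
  set b := B (Zvec n 0) (Zvec n 1)
  have hB_perm (σ : Equiv.Perm (Fin (n + 1))) (i j : Fin (n + 1)) :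
      B (Zvec n (σ i)) (Zvec n (σ j)) = B (Zvec n i) (Zvec n j) := by
    simpa [Zvec_comp_perm] using (hperm σ _ (Zvec_mem_Tang n (σ i)) _ (Zvec_mem_Tang n (σ j))).symm
  have hentry (i j : Fin (n + 1)) : B (Zvec n i) (Zvec n j) = if i = j then a else b := by
    split_ifs with hij
    · subst hij
      simpa using hB_perm (Equiv.swap 0 i) 0 0
    · have h01 : (0 : Fin (n + 1)) ≠ 1 := by
        intro h
        have hn : n + 1 = 1 := Fin.zero_eq_one_iff.mp h
        exact hij (Fin.ext (by omega))
      obtain ⟨σ, rfl, rfl⟩ := Equiv.Perm.exists_apply_eq_and_apply_eq h01 hij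
      exact hB_perm σ 0 1
  refine ⟨a - b, fun X hX Y hY => ?_⟩
  have hXsum : ∑ i, X i = 0 := hX
  have hYsum : ∑ i, Y i = 0 := hY
  calc B X Y = B (∑ i, X i • Zvec n i) (∑ j, Y j • Zvec n j) := by
        rw [sum_smul_Zvec hX, sum_smul_Zvec hY]
    _ = ∑ i, ∑ j, X i * Y j * (if i = j then a else b) := by
        simp only [hB.apply_sum_smul_sum_smul, hentry]
    _ = b * ((∑ i, X i) * (∑ j, Y j)) + (a - b) * X ⬝ᵥ Y := by
        have hsplit (i j : Fin (n + 1)) : X i * Y j * (if i = j then a else b) =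
            b * (X i * Y j) + if i = j then (a - b) * (X i * Y j) else 0 := by
          split_ifs <;> ring
        rw [Finset.sum_mul_sum]
        simp [hsplit, Finset.sum_add_distrib, Finset.mul_sum, dotProduct]
    _ = (a - b) * X ⬝ᵥ Y := by rw [hXsum, hYsum, zero_mul, mul_zero, zero_add]

theorem mem_Psim_of_pos {n : ℕ} (hn : 0 < n) {p : Fin (n + 1) → ℝ} (hpos : ∀ i, 0 < p i)
    (hsum : ∑ i, p i = 1) : p ∈ Psim n := by
  refine ⟨fun i => ⟨hpos i, ?_⟩, hsum⟩
  have : Nontrivial (Fin (n + 1)) := Fin.nontrivial_iff_two_le.mpr (by omega)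
  obtain ⟨j, hji⟩ := exists_ne i
  rw [← hsum]
  exact Finset.single_lt_sum hji (mem_univ i) (mem_univ j) (hpos j) fun k _ _ => (hpos k).le

namespace IsMarkovPartition

variable {n N : ℕ} {Q : Fin (n + 1) → Fin (N + 1) → ℝ}

theorem eq_zero_of_ne (hQ : IsMarkovPartition Q) {i j : Fin (n + 1)} {I : Fin (N + 1)}
    (hi : Q i I ≠ 0) (hji : j ≠ i) : Q j I = 0 := by
  obtain ⟨i', -, huniq⟩ := hQ.2 I
  by_contra hj
  exact hji ((huniq j hj).trans (huniq i hi).symm)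

theorem mEmb_apply_of_ne_zero (hQ : IsMarkovPartition Q) {i : Fin (n + 1)} {I : Fin (N + 1)}
    (hi : Q i I ≠ 0) (Z : Fin (n + 1) → ℝ) : mEmb Q Z I = Z i * Q i I :=
  Finset.sum_eq_single i (fun _ _ hji => by rw [hQ.eq_zero_of_ne hi hji, mul_zero]) (by simp)

theorem mEmb_mem_Tang (hQ : IsMarkovPartition Q) {X : Fin (n + 1) → ℝ} (hX : X ∈ Tang n) :
    mEmb Q X ∈ Tang N := by
  have hX : ∑ i, X i = 0 := hX
  change ∑ I, ∑ i, X i * Q i I = 0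
  rw [Finset.sum_comm]
  simp [← Finset.mul_sum, (hQ.1 _).2, hX]

theorem fish_mEmb (hQ : IsMarkovPartition Q) (p X Y : Fin (n + 1) → ℝ) :
    Fish N (mEmb Q p) (mEmb Q X) (mEmb Q Y) = Fish n p X Y := by
  have hterm (I : Fin (N + 1)) :
      mEmb Q X I * mEmb Q Y I / mEmb Q p I = ∑ i, X i * Y i / p i * Q i I := by
    obtain ⟨i, hi, -⟩ := hQ.2 I
    rw [hQ.mEmb_apply_of_ne_zero hi, hQ.mEmb_apply_of_ne_zero hi, hQ.mEmb_apply_of_ne_zero hi,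
      Finset.sum_eq_single i (fun _ _ hji => by rw [hQ.eq_zero_of_ne hi hji, mul_zero]) (by simp),
      mul_mul_mul_comm, mul_div_mul_comm, mul_self_div_self]
  simp only [Fish, hterm]
  rw [Finset.sum_comm]
  simp [← Finset.mul_sum, (hQ.1 _).2]

end IsMarkovPartition

section FiberPartition

variable {n N : ℕ} (f : Fin (N + 1) → Fin (n + 1))

def fiberPartition : Fin (n + 1) → Fin (N + 1) → ℝ :=
  fun i I => if f I = i then (#{J | f J = i} : ℝ)⁻¹ else 0

/-- The image `f_* b_N` of the uniform distribution under `f`. -/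
def bunifMap : Fin (n + 1) → ℝ :=
  fun i => #{J | f J = i} / (N + 1)

theorem card_fiber_pos (I : Fin (N + 1)) : 0 < #{J | f J = f I} :=
  Finset.card_pos.mpr ⟨I, by simp⟩

theorem mEmb_fiberPartition (Z : Fin (n + 1) → ℝ) :
    mEmb (fiberPartition f) Z = fun I => Z (f I) / #{J | f J = f I} := by
  ext I
  simp [mEmb, fiberPartition, div_eq_mul_inv]

theorem isMarkovPartition_fiberPartition (hf : Function.Surjective f) :
    IsMarkovPartition (fiberPartition f) := by
  refine ⟨fun i => ⟨fun I => ?_, ?_⟩, fun I => ⟨f I, ?_, fun i hi => ?_⟩⟩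
  · unfold fiberPartition; split_ifs <;> positivity
  · obtain ⟨I, rfl⟩ := hf i
    have := card_fiber_pos f I
    simp [fiberPartition, Finset.sum_ite, Finset.sum_const]
  · have := card_fiber_pos f I
    simp [fiberPartition]
  · by_contra h
    exact hi (by simp [fiberPartition, Ne.symm h])

theorem mEmb_fiberPartition_bunifMap : mEmb (fiberPartition f) (bunifMap f) = bunif N := by
  ext I
  have := card_fiber_pos f I
  simp [mEmb_fiberPartition, bunifMap, bunif]
  field_simp

theorem sum_bunifMap : ∑ i, bunifMap f i = 1 := by
  simp only [bunifMap]
  rw [← Finset.sum_div, div_eq_one_iff_eq (by positivity)]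
  have := Finset.card_eq_sum_card_fiberwise (f := f) (s := univ) (t := univ) (by simp)
  simp only [Finset.card_univ, Fintype.card_fin] at this
  exact_mod_cast this.symm

theorem bunifMap_mem_Psim (hn : 0 < n) (hf : Function.Surjective f) : bunifMap f ∈ Psim n := by
  have hpos (i : Fin (n + 1)) : 0 < bunifMap f i := by
    obtain ⟨I, rfl⟩ := hf i
    have := card_fiber_pos f I
    unfold bunifMap; positivity
  exact mem_Psim_of_pos hn hpos (sum_bunifMap f)

theorem mEmb_fiberPartition_perm (σ : Equiv.Perm (Fin (n + 1))) (Z : Fin (n + 1) → ℝ) :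
    mEmb (fiberPartition σ) Z = Z ∘ σ := by
  ext I
  simp [mEmb_fiberPartition, σ.injective.eq_iff, Finset.filter_eq']

end FiberPartition

theorem exists_card_fiber_eq {n N : ℕ} (m : Fin (n + 1) → ℕ) (hm : ∑ i, m i = N + 1) :
    ∃ f : Fin (N + 1) → Fin (n + 1), ∀ i, #{J | f J = i} = m i := by
  let e : Fin (N + 1) ≃ Σ i, Fin (m i) := (finCongr hm.symm).trans finSigmaFinEquiv.symm
  refine ⟨fun J => (e J).1, fun i => ?_⟩
  rw [← Fintype.card_subtype, ← Fintype.card_fin (m i)]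
  exact Fintype.card_congr ((e.subtypeEquiv fun _ => Iff.rfl).trans (Equiv.sigmaSubtype i))

theorem le_of_surjective_fin {n N : ℕ} {f : Fin (N + 1) → Fin (n + 1)}
    (hf : Function.Surjective f) : n ≤ N := by
  simpa using Fintype.card_le_of_surjective f hf

theorem exists_surjective_bunifMap_eq {n N : ℕ} (m : Fin (n + 1) → ℕ) (hm : ∀ i, 0 < m i)
    (hM : ∑ i, m i = N + 1) :
    ∃ f : Fin (N + 1) → Fin (n + 1), Function.Surjective f ∧
      bunifMap f = fun i => (m i : ℝ) / (N + 1) := by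
  obtain ⟨f, hf⟩ := exists_card_fiber_eq m hM
  refine ⟨f, fun i => ?_, funext fun i => by simp only [bunifMap, hf]⟩
  obtain ⟨I, hI⟩ := Finset.card_pos.mp (by rw [hf i]; exact hm i)
  exact ⟨I, (Finset.mem_filter.mp hI).2⟩

theorem exists_surjective_bunifMap_eq_bunif {n N K : ℕ} (hK : (n + 1) * K = N + 1) :
    ∃ f : Fin (N + 1) → Fin (n + 1), Function.Surjective f ∧ bunifMap f = bunif n := by
  have hK0 : 0 < K := Nat.pos_of_ne_zero (by rintro rfl; simp at hK)
  obtain ⟨f, hf, hfK⟩ := exists_surjective_bunifMap_eq (n := n) (N := N) (fun _ => K)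
    (fun _ => hK0) (by simp [hK])
  refine ⟨f, hf, hfK.trans (funext fun _ => ?_)⟩
  have hK' : ((n : ℝ) + 1) * K = N + 1 := by exact_mod_cast hK
  rw [bunif, ← hK']
  field_simp

theorem bunif_mem_Psim {N : ℕ} (hN : 0 < N) : bunif N ∈ Psim N :=
  mem_Psim_of_pos hN (fun _ => by unfold bunif; positivity) (by simp [bunif]; field_simp)

theorem fish_bunif (N : ℕ) (X Y : Fin (N + 1) → ℝ) :
    Fish N (bunif N) X Y = (N + 1) * X ⬝ᵥ Y := by
  simp [Fish, bunif, dotProduct, Finset.mul_sum, mul_comm]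

theorem continuousOn_fish (n : ℕ) (X Y : Fin (n + 1) → ℝ) :
    ContinuousOn (fun p => Fish n p X Y) (Psim n) :=
  continuousOn_finsetSum _ fun i _ =>
    continuousOn_const.div (continuous_apply i).continuousOn fun _ hp => (hp.1 i).1.ne'

def MarkovInvariant
    (A : (n : ℕ) → (Fin (n + 1) → ℝ) → (Fin (n + 1) → ℝ) → (Fin (n + 1) → ℝ) → ℝ) : Prop :=
  ∀ n N : ℕ, 0 < n → n ≤ N → ∀ Q : Fin (n + 1) → Fin (N + 1) → ℝ,
    IsMarkovPartition Q → ∀ p ∈ Psim n, ∀ X ∈ Tang n, ∀ Y ∈ Tang n,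
      A N (mEmb Q p) (mEmb Q X) (mEmb Q Y) = A n p X Y

namespace MarkovInvariant

variable {A : (n : ℕ) → (Fin (n + 1) → ℝ) → (Fin (n + 1) → ℝ) → (Fin (n + 1) → ℝ) → ℝ}

theorem comp_perm (hA : MarkovInvariant A) {n : ℕ} (hn : 0 < n) (σ : Equiv.Perm (Fin (n + 1)))
    {p X Y : Fin (n + 1) → ℝ} (hp : p ∈ Psim n) (hX : X ∈ Tang n) (hY : Y ∈ Tang n) :
    A n (p ∘ σ) (X ∘ σ) (Y ∘ σ) = A n p X Y := by
  simpa only [mEmb_fiberPartition_perm] using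
    hA n n hn le_rfl _ (isMarkovPartition_fiberPartition σ σ.surjective) p hp X hX Y hY

theorem exists_eq_mul_fish_bunif (hA : MarkovInvariant A) (hsymm : SymmTF A) {N : ℕ}
    (hN : 0 < N) :
    ∃ lam : ℝ, ∀ X ∈ Tang N, ∀ Y ∈ Tang N, A N (bunif N) X Y = lam * Fish N (bunif N) X Y := by
  obtain ⟨c, hc⟩ := (hsymm N hN _ (bunif_mem_Psim hN)).exists_eq_mul_dotProduct
    fun σ X hX Y hY => hA.comp_perm hN σ (bunif_mem_Psim hN) hX hY
  refine ⟨c / (N + 1), fun X hX Y hY => ?_⟩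
  rw [hc X hX Y hY, fish_bunif]
  field_simp

theorem eq_mul_fish_bunifMap (hA : MarkovInvariant A) {n N : ℕ} (hn : 0 < n) {lam : ℝ}
    (hunif : ∀ X ∈ Tang N, ∀ Y ∈ Tang N, A N (bunif N) X Y = lam * Fish N (bunif N) X Y)
    {f : Fin (N + 1) → Fin (n + 1)} (hf : Function.Surjective f)
    {X Y : Fin (n + 1) → ℝ} (hX : X ∈ Tang n) (hY : Y ∈ Tang n) :
    A n (bunifMap f) X Y = lam * Fish n (bunifMap f) X Y := by
  have hQ := isMarkovPartition_fiberPartition f hf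
  calc A n (bunifMap f) X Y
      = A N (mEmb (fiberPartition f) (bunifMap f)) (mEmb (fiberPartition f) X)
          (mEmb (fiberPartition f) Y) :=
        (hA n N hn (le_of_surjective_fin hf) _ hQ _ (bunifMap_mem_Psim f hn hf) X hX Y hY).symm
    _ = lam * Fish N (mEmb (fiberPartition f) (bunifMap f)) (mEmb (fiberPartition f) X)
          (mEmb (fiberPartition f) Y) := by
        rw [mEmb_fiberPartition_bunifMap]
        exact hunif _ (hQ.mEmb_mem_Tang hX) _ (hQ.mEmb_mem_Tang hY)
    _ = lam * Fish n (bunifMap f) X Y := by rw [hQ.fish_mEmb]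

theorem eq_mul_fish_bunif (hA : MarkovInvariant A) (hsymm : SymmTF A) {lam : ℝ}
    (hlam : ∀ X ∈ Tang 1, ∀ Y ∈ Tang 1, A 1 (bunif 1) X Y = lam * Fish 1 (bunif 1) X Y)
    {N : ℕ} (hN : 0 < N) :
    ∀ X ∈ Tang N, ∀ Y ∈ Tang N, A N (bunif N) X Y = lam * Fish N (bunif N) X Y := by
  obtain ⟨lam', hlam'⟩ := hA.exists_eq_mul_fish_bunif hsymm (N := 2 * N + 1) (by omega)
  obtain ⟨f₁, hf₁, hbunif₁⟩ :=
    exists_surjective_bunifMap_eq_bunif (n := 1) (N := 2 * N + 1) (K := N + 1) (by ring)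
  obtain ⟨f₂, hf₂, hbunif₂⟩ :=
    exists_surjective_bunifMap_eq_bunif (n := N) (N := 2 * N + 1) (K := 2) (by ring)
  have hlam_eq : lam' = lam := by
    have hv : ![1, -1] ∈ Tang 1 := by simp [Tang]
    have h := hA.eq_mul_fish_bunifMap one_pos hlam' hf₁ hv hv
    rw [hbunif₁, hlam _ hv _ hv] at h
    have hfish : Fish 1 (bunif 1) ![1, -1] ![1, -1] = 4 := by
      norm_num [Fish, bunif, Fin.sum_univ_succ]
    rw [hfish] at h
    linarith
  intro X hX Y hY
  rw [← hbunif₂, ← hlam_eq]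
  exact hA.eq_mul_fish_bunifMap hN hlam' hf₂ hX hY

end MarkovInvariant

theorem tendsto_natCast_floor_mul_add_one_div {a : ℝ} (ha : 0 ≤ a) :
    Tendsto (fun k : ℕ => ((⌊k * a⌋₊ + 1 : ℕ) : ℝ) / k) atTop (𝓝 a) := by
  have hfloor := ((tendsto_nat_floor_mul_div_atTop ha).comp tendsto_natCast_atTop_atTop).add
    tendsto_one_div_atTop_nhds_zero_nat
  rw [add_zero] at hfloor
  refine hfloor.congr fun k => ?_
  simp [add_div, mul_comm]

theorem Psim_subset_closure_bunifMap (n : ℕ) :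
    Psim n ⊆ closure {q | ∃ (N : ℕ) (f : Fin (N + 1) → Fin (n + 1)),
      Function.Surjective f ∧ bunifMap f = q} := by
  intro p hp
  set m : ℕ → Fin (n + 1) → ℕ := fun k i => ⌊k * p i⌋₊ + 1
  have hm (k : ℕ) (i : Fin (n + 1)) : 0 < m k i := Nat.succ_pos _
  have hlim (i : Fin (n + 1)) : Tendsto (fun k : ℕ => (m k i : ℝ) / k) atTop (𝓝 (p i)) :=
    tendsto_natCast_floor_mul_add_one_div (hp.1 i).1.le
  have hsum : Tendsto (fun k : ℕ => ∑ j, (m k j : ℝ) / k) atTop (𝓝 1) :=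
    hp.2 ▸ tendsto_finsetSum _ fun j _ => hlim j
  refine mem_closure_of_tendsto (b := atTop)
    (f := fun (k : ℕ) i => (m k i : ℝ) / ∑ j, (m k j : ℝ))
    (tendsto_pi_nhds.mpr fun i => ?_) (Eventually.of_forall fun k => ?_)
  · have hratio := (hlim i).div hsum one_ne_zero
    rw [div_one] at hratio
    refine hratio.congr' ((eventually_ne_atTop 0).mono fun k hk => ?_)
    simp only [Pi.div_apply]
    rw [← Finset.sum_div, div_div_div_cancel_right₀ (Nat.cast_ne_zero.mpr hk)]
  · have hpos : 0 < ∑ j, m k j := Finset.sum_pos (fun j _ => hm k j) univ_nonempty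
    obtain ⟨f, hf, hfm⟩ := exists_surjective_bunifMap_eq (m k) (hm k)
      (Nat.succ_pred_eq_of_pos hpos).symm
    refine ⟨_, f, hf, hfm.trans (funext fun i => ?_)⟩
    rw [← Nat.cast_sum, ← Nat.cast_succ, Nat.succ_pred_eq_of_pos hpos]

/-- **Čencov's theorem.** If `{A_n}` is a family of continuous symmetric
`(0,2)`-tensor fields on `P_n` such that the pullback of `A_N` by every Markov
embedding `F : P_n → P_N` (`n ≤ N`) equals `A_n`, then there is `λ ∈ ℝ` with
`A_n = λ g_n^F` for every `n`. -/
theorem cencov_theorem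
    (A : (n : ℕ) → (Fin (n + 1) → ℝ) → (Fin (n + 1) → ℝ) → (Fin (n + 1) → ℝ) → ℝ)
    (hsymm : SymmTF A)
    (hcont : ∀ n : ℕ, 0 < n → ∀ X Y : Fin (n + 1) → ℝ,
      ContinuousOn (fun p => A n p X Y) (Psim n))
    (hinv : ∀ n N : ℕ, 0 < n → n ≤ N → ∀ Q : Fin (n + 1) → Fin (N + 1) → ℝ,
      IsMarkovPartition Q → ∀ p ∈ Psim n, ∀ X ∈ Tang n, ∀ Y ∈ Tang n,
        A N (mEmb Q p) (mEmb Q X) (mEmb Q Y) = A n p X Y) :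
    ∃ lam : ℝ, ∀ n : ℕ, 0 < n → ∀ p ∈ Psim n, ∀ X ∈ Tang n, ∀ Y ∈ Tang n,
      A n p X Y = lam * Fish n p X Y := by
  have hA : MarkovInvariant A := hinv
  obtain ⟨lam, hlam⟩ := hA.exists_eq_mul_fish_bunif hsymm one_pos
  refine ⟨lam, fun n hn p hp X hX Y hY => ?_⟩
  refine Set.EqOn.of_subset_closure (f := fun q => A n q X Y) (g := fun q => lam * Fish n q X Y)
    ?_ (hcont n hn X Y) (continuousOn_const.mul (continuousOn_fish n X Y)) ?_
    (Psim_subset_closure_bunifMap n) hp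
  · rintro _ ⟨N, f, hf, rfl⟩
    have hN : 0 < N := hn.trans_le (le_of_surjective_fin hf)
    exact hA.eq_mul_fish_bunifMap hn (hA.eq_mul_fish_bunif hsymm hlam hN) hf hX hY
  · rintro _ ⟨N, f, hf, rfl⟩
    exact bunifMap_mem_Psim f hn hf
end
end

section
/- For every n ∈ ℕ, all λ, μ ∈ ℝ, every α ∈ (0,1) and every permutation σ of Ω_{n+2}, the pullback of A_{n+1}^{λ,μ} by the scalar patched Markov embedding G_n^{α,σ} : P_n → P_{n+1} equals A_n^{λ,μ}. -/
open Finset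

noncomputable section

lemma sPatch_castSucc (n : ℕ) (α : ℝ) (σ : Equiv.Perm (Fin (n + 2)))
    (p : Fin (n + 1) → ℝ) (j : Fin (n + 1)) :
    sPatch n α σ p (σ j.castSucc) = α * p j := by
  have hlast : σ (Fin.last (n + 1)) ≠ σ j.castSucc := by
    simp [Equiv.apply_eq_iff_eq, (Fin.castSucc_lt_last j).ne']
  simp [sPatch, hlast, Equiv.apply_eq_iff_eq, Fin.castSucc_inj]

lemma sPatch_last (n : ℕ) (α : ℝ) (σ : Equiv.Perm (Fin (n + 2)))
    (p : Fin (n + 1) → ℝ) :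
    sPatch n α σ p (σ (Fin.last (n + 1))) = 1 - α := by
  have h : ∀ i : Fin (n + 1), σ i.castSucc ≠ σ (Fin.last (n + 1)) := fun i => by
    simp [Equiv.apply_eq_iff_eq, (Fin.castSucc_lt_last i).ne]
  simp [sPatch, h]

lemma sPatchD_castSucc (n : ℕ) (α : ℝ) (σ : Equiv.Perm (Fin (n + 2)))
    (X : Fin (n + 1) → ℝ) (j : Fin (n + 1)) :
    sPatchD n α σ X (σ j.castSucc) = α * X j := by
  simp [sPatchD, Equiv.apply_eq_iff_eq, Fin.castSucc_inj]

lemma sPatchD_last (n : ℕ) (α : ℝ) (σ : Equiv.Perm (Fin (n + 2)))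
    (X : Fin (n + 1) → ℝ) :
    sPatchD n α σ X (σ (Fin.last (n + 1))) = 0 := by
  have h : ∀ i : Fin (n + 1), σ i.castSucc ≠ σ (Fin.last (n + 1)) := fun i => by
    simp [Equiv.apply_eq_iff_eq, (Fin.castSucc_lt_last i).ne]
  simp [sPatchD, h]

/-- The pullback of `A_{n+1}^{λ,μ}` by every scalar patched Markov embedding
`G_n^{α,σ} : P_n → P_{n+1}` equals `A_n^{λ,μ}`. -/
theorem pullback_Alm_scalar_patch (n : ℕ) (hn : 0 < n) (lam mu : ℝ)
    (α : ℝ) (hα : α ∈ Set.Ioo (0 : ℝ) 1) (σ : Equiv.Perm (Fin (n + 2))) :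
    ∀ p ∈ Psim n, ∀ X ∈ Tang n, ∀ Y ∈ Tang n,
      Alm (n + 1) lam mu (sPatch n α σ p) (sPatchD n α σ X) (sPatchD n α σ Y) =
        Alm n lam mu p X Y := by
  intro p hp X hX Y hY
  have hα0 : α ≠ 0 := ne_of_gt hα.1
  have hp0 : ∀ i, p i ≠ 0 := fun i => ne_of_gt (hp.1 i).1
  have hsum : ∀ f : Fin (n + 2) → ℝ, ∑ I, f I = (∑ j : Fin (n + 1), f (σ j.castSucc))
      + f (σ (Fin.last (n + 1))) := by
    intro f
    rw [← Equiv.sum_comp σ f, Fin.sum_univ_castSucc]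
  have hAd : Ad (n + 1) (sPatch n α σ p) (sPatchD n α σ X) (sPatchD n α σ Y)
      = Ad n p X Y := by
    unfold Ad
    rw [hsum]
    simp only [sPatch_castSucc, sPatch_last, sPatchD_castSucc, sPatchD_last,
      zero_mul, zero_div, add_zero]
    refine Finset.sum_congr rfl fun i _ => ?_
    rw [mul_pow, show (α * X i) * (α * Y i) = α ^ 2 * (X i * Y i) by ring,
      mul_div_mul_left _ _ (pow_ne_zero 2 hα0)]
  have hAs : As (n + 1) (sPatch n α σ p) (sPatchD n α σ X) (sPatchD n α σ Y)
      = As n p X Y := by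
    unfold As
    rw [hsum, hsum]
    simp only [sPatch_castSucc, sPatch_last, sPatchD_castSucc, sPatchD_last,
      zero_div, add_zero]
    congr 1 <;> refine Finset.sum_congr rfl fun i _ => ?_ <;>
      rw [mul_div_mul_left _ _ hα0]
  unfold Alm
  rw [hAd, hAs]
end
end

section
/- Let G_n : P_n → P_{n+1} be a patched Markov embedding determined by Q_i = a_i δ_{σ(i)} + (1−a_i) δ_{σ(n+2)} for a permutation σ of Ω_{n+2} and weights a_i ∈ (0,1). Fix j ∈ Ω_{n+1}, b ∈ (0,1) and c ∈ ℝ, and let P' := {p ∈ P_n | p(j) = b and ∑_{i∈Ω_{n+1}} a_i p(i) = c}. Define κ : Ω_{n+2} → Ω_{n+1} by κ(I) = i if I = σ(i) with i ∈ Ω_{n+1}, and κ(σ(n+2)) = j; and define t : Ω_{n+2} → ℝ by t(σ(i)) = a_i for i ∈ Ω_{n+1} and t(σ(n+2)) = (1−c)/b. Then for every p ∈ P' and every I ∈ Ω_{n+2}, G_n(p)(I) = p(κ(I)) · t(I); that is, κ is a Fisher–Neyman sufficient statistic for the family G_n(P'). -/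
open Finset

noncomputable section

/-- For a patched Markov embedding `G_n` with weights `a_i` and the submanifold
`P' = {p ∈ P_n | p(j) = b, ∑_i a_i p(i) = c}`, the map `κ` (sending `σ(i) ↦ i`
and `σ(n+2) ↦ j`) is a Fisher–Neyman sufficient statistic:
`G_n(p)(I) = p(κ(I)) · t(I)` with `t(σ(i)) = a_i` and `t(σ(n+2)) = (1-c)/b`. -/
theorem patched_embedding_sufficient (n : ℕ) (hn : 0 < n)
    (a : Fin (n + 1) → ℝ) (ha : ∀ i, a i ∈ Set.Ioo (0 : ℝ) 1)
    (σ : Equiv.Perm (Fin (n + 2))) (j : Fin (n + 1)) (b c : ℝ)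
    (hb : b ∈ Set.Ioo (0 : ℝ) 1)
    (κ : Fin (n + 2) → Fin (n + 1)) (t : Fin (n + 2) → ℝ)
    (hκ1 : ∀ i : Fin (n + 1), κ (σ i.castSucc) = i)
    (hκ2 : κ (σ (Fin.last (n + 1))) = j)
    (ht1 : ∀ i : Fin (n + 1), t (σ i.castSucc) = a i)
    (ht2 : t (σ (Fin.last (n + 1))) = (1 - c) / b) :
    ∀ p ∈ Psim n, p j = b → (∑ i, a i * p i) = c →
      ∀ I : Fin (n + 2), patch n a σ p I = p (κ I) * t I := by
  intro p hp hpj hsum I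
  obtain ⟨k, rfl⟩ : ∃ k, I = σ k := ⟨σ.symm I, (σ.apply_symm_apply I).symm⟩
  have hlast : ∀ i : Fin (n + 1), σ i.castSucc ≠ σ (Fin.last (n + 1)) := by
    intro i h
    have := σ.injective h
    simp [Fin.ext_iff] at this
    omega
  rcases Fin.eq_castSucc_or_eq_last k with ⟨i, rfl⟩ | rfl
  · rw [hκ1, ht1]
    unfold patch
    rw [Finset.sum_eq_single i]
    · simp [Ne.symm (hlast i)]
    · intro m _ hm
      have h1 : σ m.castSucc ≠ σ i.castSucc := by
        simp [σ.injective.eq_iff, Fin.castSucc_inj, hm]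
      simp [h1, Ne.symm (hlast i)]
    · simp
  · rw [hκ2, ht2, hpj]
    simp only [patch, if_neg (hlast _), if_pos rfl, mul_zero, zero_add, mul_one]
    have h2 : ∑ i, p i * a i = c := by
      rw [← hsum]; exact Finset.sum_congr rfl fun i _ => mul_comm _ _
    have h1 : ∑ i, p i * (1 - a i) = 1 - c := by
      simp only [mul_sub, mul_one, Finset.sum_sub_distrib, hp.2, h2]
    simp only [if_true, mul_one]
    rw [h1, mul_div_cancel₀ _ (ne_of_gt hb.1)]
end
end

section
/- The tensor fields A_1^s on P_1 and A_2^s on P_2 satisfy condition (C2): A_1^s is positive semidefinite and degenerate at b_1, and for any two pairs of distinct indices (i,j), (k,l) in Ω_3, all α, u ∈ (0,1) and all permutations σ of Ω_3, A_2^s( dH^{σ(i)σ(j)}_{ψ_u^σ(α)}((Z_1^1)_{u_α^{ij}}), dH^{σ(k)σ(l)}_{ψ_u^σ(α)}((Z_1^1)_{u_α^{kl}}) ) = sgn(2u_α^{ij}−1)·√(A_1^s(Z_1^1,Z_1^1)_{p_{u_α^{ij}}}) · sgn(2u_α^{kl}−1)·√(A_1^s(Z_1^1,Z_1^1)_{p_{u_α^{kl}}}),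 with sgn(0) := 0. -/
open Finset

noncomputable section

/-! `A^s(X,Y)_p = ℓ_p(X) ℓ_p(Y)` with `ℓ_p(X) = ∑ X^i / p(i)`, so `A^s` is positive semidefinite,
and `ℓ_{b_1}(X) = 2 ∑ X^i` vanishes on tangent vectors. Both `dH^{ij}_q(Z_1^1)` at `q` and `Z_1^1`
at `p_u`, `u = q(i)/(q(i)+q(j))`, have `ℓ`-value `((q(i)+q(j))/2)(1/q(i) - 1/q(j))`, whose sign is
opposite to that of `2u - 1`; hence `sgn(2u-1) √(A_1^s(Z_1^1,Z_1^1))` is minus this value, and the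
two minus signs cancel in the product. -/

lemma Real.sign_mul_abs (x : ℝ) : Real.sign x * |x| = x := by
  rcases lt_trichotomy x 0 with h | rfl | h
  · rw [Real.sign_of_neg h, abs_of_neg h]; ring
  · simp
  · rw [Real.sign_of_pos h, abs_of_pos h, one_mul]

lemma As_self (n : ℕ) (p X : Fin (n + 1) → ℝ) : As n p X X = (∑ i, X i / p i) ^ 2 :=
  (sq _).symm

lemma sum_div_bunif (n : ℕ) (X : Fin (n + 1) → ℝ) :
    ∑ i, X i / bunif n i = (n + 1) * ∑ i, X i := by
  simp only [bunif, div_div_eq_mul_div, div_one, ← Finset.sum_mul]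
  ring

lemma Zvec_sub_Zvec (n : ℕ) (i j : Fin (n + 1)) :
    Zvec n i - Zvec n j = Pi.single i 1 - Pi.single j 1 := by
  ext k
  simp only [Zvec, Pi.sub_apply, Pi.single_apply]
  ring

lemma sum_smul_single_sub_single_div (n : ℕ) (c : ℝ) (p : Fin (n + 1) → ℝ) (i j : Fin (n + 1)) :
    ∑ k, (c • (Pi.single i 1 - Pi.single j 1 : Fin (n + 1) → ℝ)) k / p k =
      c * (1 / p i - 1 / p j) := by
  simp only [Pi.smul_apply, Pi.sub_apply, smul_eq_mul, mul_sub, sub_div, Finset.sum_sub_distrib,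
    Pi.single_apply, mul_ite, mul_one, mul_zero, ite_div, zero_div, Finset.sum_ite_eq',
    Finset.mem_univ, if_true, mul_one_div]

lemma sum_dHvec_div (q : Fin 3 → ℝ) (i j : Fin 3) :
    ∑ k, dHvec q i j k / q k = (q i + q j) / 2 * (1 / q i - 1 / q j) := by
  rw [dHvec, Zvec_sub_Zvec, sum_smul_single_sub_single_div]

lemma sPatch_apply_perm (n : ℕ) (α : ℝ) (σ : Equiv.Perm (Fin (n + 2))) (p : Fin (n + 1) → ℝ)
    (I : Fin (n + 2)) : sPatch n α σ p (σ I) = sPatch n α (Equiv.refl _) p I := by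
  simp only [sPatch, σ.injective.eq_iff]
  rfl

lemma psiPt_apply_perm (α u : ℝ) (σ : Equiv.Perm (Fin 3)) (k : Fin 3) :
    psiPt α u σ (σ k) = psiPt α u (Equiv.refl _) k :=
  sPatch_apply_perm 1 α σ (pu u) k

lemma psiPt_refl (α u : ℝ) : psiPt α u (Equiv.refl _) = ![α * u, α * (1 - u), 1 - α] := by
  ext k
  fin_cases k <;> simp [psiPt, sPatch, pu, Fin.sum_univ_two]

lemma psiPt_refl_pos {α u : ℝ} (hα : α ∈ Set.Ioo (0 : ℝ) 1) (hu : u ∈ Set.Ioo (0 : ℝ) 1)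
    (k : Fin 3) : 0 < psiPt α u (Equiv.refl _) k := by
  obtain ⟨hα0, hα1⟩ := hα
  obtain ⟨hu0, hu1⟩ := hu
  rw [psiPt_refl]
  fin_cases k <;> simp <;> nlinarith

lemma sum_Zvec_div_pu (u : ℝ) (hu : u ∈ Set.Ioo (0 : ℝ) 1) :
    ∑ k, Zvec 1 0 k / pu u k = -(2 * u - 1) / (2 * u * (1 - u)) := by
  obtain ⟨hu0, hu1⟩ := hu
  have h1u : 1 - u ≠ 0 := by linarith
  simp [Fin.sum_univ_succ, Zvec, pu]
  field_simp
  ring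

lemma sign_mul_sqrt_As_pu (u : ℝ) (hu : u ∈ Set.Ioo (0 : ℝ) 1) :
    Real.sign (2 * u - 1) * Real.sqrt (As 1 (pu u) (Zvec 1 0) (Zvec 1 0)) =
      -∑ k, Zvec 1 0 k / pu u k := by
  have hd : 0 < 2 * u * (1 - u) := by nlinarith [hu.1, hu.2]
  rw [As_self, Real.sqrt_sq_eq_abs, sum_Zvec_div_pu u hu, abs_div, abs_neg, abs_of_pos hd,
    ← mul_div_assoc, Real.sign_mul_abs, neg_div, neg_neg]

lemma sum_Zvec_div_pu_ratio {a b : ℝ} (ha : 0 < a) (hb : 0 < b) :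
    ∑ k, Zvec 1 0 k / pu (a / (a + b)) k = (a + b) / 2 * (1 / a - 1 / b) := by
  have hab : 0 < a + b := by linarith
  have hcompl : 1 - a / (a + b) = b / (a + b) := by field_simp; ring
  rw [sum_Zvec_div_pu _ ⟨div_pos ha hab, (div_lt_one hab).2 (by linarith)⟩, hcompl]
  field_simp
  ring

lemma sign_mul_sqrt_As_pu_ratio {a b : ℝ} (ha : 0 < a) (hb : 0 < b) :
    Real.sign (2 * (a / (a + b)) - 1) *
        Real.sqrt (As 1 (pu (a / (a + b))) (Zvec 1 0) (Zvec 1 0)) =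
      -((a + b) / 2 * (1 / a - 1 / b)) := by
  have hab : 0 < a + b := add_pos ha hb
  rw [sign_mul_sqrt_As_pu _ ⟨div_pos ha hab, (div_lt_one hab).2 (by linarith)⟩,
    sum_Zvec_div_pu_ratio ha hb]

/-- `A_1^s` and `A_2^s` satisfy condition (C2). -/
theorem As_satisfies_C2 : CondC2 (As 1) (As 2) := by
  refine ⟨fun p _ X _ => As_self 1 p X ▸ sq_nonneg _, ?_, ?_⟩
  · refine ⟨![1, -1], by simp [Tang], fun h => by simpa using congrFun h 0, fun Y _ => ?_⟩
    have hX : ∑ i, (![1, -1] : Fin 2 → ℝ) i = 0 := by simp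
    rw [As, sum_div_bunif, hX, mul_zero, zero_mul]
  · intro α hα u hu σ i j k l _ _
    have hq := psiPt_refl_pos hα hu
    have hdH : ∀ a b, ∑ m, dHvec (psiPt α u σ) (σ a) (σ b) m / psiPt α u σ m =
        -(Real.sign (2 * uRatio α u a b - 1) *
          Real.sqrt (As 1 (pu (uRatio α u a b)) (Zvec 1 0) (Zvec 1 0))) := fun a b => by
      rw [sum_dHvec_div, psiPt_apply_perm, psiPt_apply_perm, uRatio,
        sign_mul_sqrt_As_pu_ratio (hq a) (hq b), neg_neg]
    rw [As, hdH, hdH, neg_mul_neg]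
end
end

section
/- For each n ∈ ℕ let A_n be a symmetric (0,2)-tensor field on P_n, and assume that for every n ∈ ℕ and each scalar patched Markov embedding G_n : P_n → P_{n+1}, the pullback of A_{n+1} by G_n equals A_n. Then for every permutation σ of Ω_3, all α, u ∈ (0,1), and every W_{σ(3)} ∈ E^{σ(3)} decomposed as W_{σ(3)} = W_{σ(1)} + W_{σ(2)} with W_{σ(1)} ∈ E^{σ(1)}, W_{σ(2)} ∈ E^{σ(2)}, one has A_2(W_{σ(3)}, W_{σ(1)})_{ψ_u^σ(α)} = A_2(W_{σ(3)}, W_{σ(2)})_{ψ_{1−u}^σ(α)}. -/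
open Finset

noncomputable section

/-!
Pulling `A_2` back along `G_1^{s,τ}` shows that at `q ∈ P_2` the value
`A_2(e_i - e_j, e_i - e_j)_q` is `w(q_i, q_j) := f(q_i / (q_i + q_j)) / (q_i + q_j)²` with
`f(t) = A_1(e_1 - e_2, e_1 - e_2)_{p_t}`; comparing `(i, j)` with `(j, i)` at the same point shows
that `w` is symmetric. Each `W ∈ E^k` is a multiple of an edge `e_i - e_j`, and the three vectors
`W_{σ(1)}, W_{σ(2)}, W_{σ(3)}` have the same coefficient `r`. Polarizing
`W_{σ(3)} = W_{σ(1)} + W_{σ(2)}` writes both sides of the identity as `r²/2` times a signed sum of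
three weights in the coordinates `αu, α(1-u), 1-α`; replacing `u` by `1 - u` swaps the first two
coordinates, and the symmetry of `w` matches the two sums.
-/

namespace IsSymmBilin

variable {n : ℕ} {B : (Fin (n + 1) → ℝ) → (Fin (n + 1) → ℝ) → ℝ}

lemma map_add_left (h : IsSymmBilin B) (X Y Z : Fin (n + 1) → ℝ) :
    B (X + Y) Z = B X Z + B Y Z := by
  simpa using h.2 1 X Y Z

lemma map_smul_left (h : IsSymmBilin B) (c : ℝ) (X Y : Fin (n + 1) → ℝ) :
    B (c • X) Y = c * B X Y := by
  have h0 : B 0 Y = 0 := by simpa using h.2 1 0 0 Y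
  simpa [h0] using h.2 c X 0 Y

lemma map_smul_smul (h : IsSymmBilin B) (c d : ℝ) (X Y : Fin (n + 1) → ℝ) :
    B (c • X) (d • Y) = c * d * B X Y := by
  rw [h.map_smul_left, h.1, h.map_smul_left, h.1 Y X]
  ring

lemma polarization (h : IsSymmBilin B) (X Y : Fin (n + 1) → ℝ) :
    2 * B (X + Y) X = B (X + Y) (X + Y) + B X X - B Y Y := by
  rw [h.map_add_left, h.map_add_left, h.1 X (X + Y), h.1 Y (X + Y), h.map_add_left,
    h.map_add_left, h.1 Y X]
  ring

end IsSymmBilin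

def edgeVec {n : ℕ} (i j : Fin n) : Fin n → ℝ := Pi.single i 1 - Pi.single j 1

lemma edgeVec_swap {n : ℕ} (i j : Fin n) : edgeVec j i = (-1 : ℝ) • edgeVec i j := by
  simp [edgeVec]

section ScalarPatch

variable (n : ℕ) (α : ℝ) (σ : Equiv.Perm (Fin (n + 2)))

lemma sPatch_apply_castSucc (p : Fin (n + 1) → ℝ) (i : Fin (n + 1)) :
    sPatch n α σ p (σ i.castSucc) = α * p i := by
  simp [sPatch, σ.injective.eq_iff, Fin.castSucc_inj, (Fin.castSucc_lt_last i).ne']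

lemma sPatch_apply_last (p : Fin (n + 1) → ℝ) :
    sPatch n α σ p (σ (Fin.last (n + 1))) = 1 - α := by
  simp [sPatch, σ.injective.eq_iff, Fin.castSucc_ne_last]

lemma sPatchD_apply_castSucc (X : Fin (n + 1) → ℝ) (i : Fin (n + 1)) :
    sPatchD n α σ X (σ i.castSucc) = α * X i := by
  simp [sPatchD, σ.injective.eq_iff, Fin.castSucc_inj]

lemma sPatchD_apply_last (X : Fin (n + 1) → ℝ) :
    sPatchD n α σ X (σ (Fin.last (n + 1))) = 0 := by
  simp [sPatchD, σ.injective.eq_iff, Fin.castSucc_ne_last]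

lemma sPatchD_edgeVec (i j : Fin (n + 1)) :
    sPatchD n α σ (edgeVec i j) = α • edgeVec (σ i.castSucc) (σ j.castSucc) := by
  funext I
  obtain ⟨J, rfl⟩ := σ.surjective I
  induction J using Fin.lastCases with
  | last => simp [sPatchD_apply_last, edgeVec, σ.injective.eq_iff, (Fin.castSucc_lt_last _).ne']
  | cast J => simp [sPatchD_apply_castSucc, edgeVec, Pi.single_apply, σ.injective.eq_iff, mul_sub]

lemma sPatchD_smul (c : ℝ) (X : Fin (n + 1) → ℝ) :
    sPatchD n α σ (c • X) = c • sPatchD n α σ X := by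
  funext I
  simp [sPatchD, Finset.mul_sum, mul_left_comm]

end ScalarPatch

lemma sum_fin_three_perm (τ : Equiv.Perm (Fin 3)) (W : Fin 3 → ℝ) :
    ∑ i, W i = W (τ 0) + W (τ 1) + W (τ 2) := by
  rw [← Equiv.sum_comp τ, Fin.sum_univ_three]

lemma pu_mem {u : ℝ} (hu : u ∈ Set.Ioo (0 : ℝ) 1) : pu u ∈ Psim 1 := by
  refine ⟨fun i => ?_, by simp [pu]⟩
  fin_cases i <;> simp [pu, hu.1, hu.2]

lemma eq_smul_edgeVec_of_mem_Esub {W : Fin 3 → ℝ} (τ : Equiv.Perm (Fin 3))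
    (hW : W ∈ Esub (τ 2)) : W = W (τ 0) • edgeVec (τ 0) (τ 1) := by
  obtain ⟨hsum, hk⟩ := hW
  rw [sum_fin_three_perm τ] at hsum
  funext I
  obtain ⟨j, rfl⟩ := τ.surjective I
  fin_cases j <;> simp [edgeVec, τ.injective.eq_iff] <;> linarith

lemma sPatch_pu_eq {q : Fin 3 → ℝ} (hq : q ∈ Psim 2) (τ : Equiv.Perm (Fin 3)) :
    sPatch 1 (q (τ 0) + q (τ 1)) τ (pu (q (τ 0) / (q (τ 0) + q (τ 1)))) = q := by
  have hsum := hq.2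
  rw [sum_fin_three_perm τ] at hsum
  have hs : q (τ 0) + q (τ 1) ≠ 0 := by linarith [(hq.1 (τ 0)).1, (hq.1 (τ 1)).1]
  funext I
  obtain ⟨j, rfl⟩ := τ.surjective I
  fin_cases j
  · refine (sPatch_apply_castSucc 1 _ τ _ 0).trans ?_
    simp only [pu, Matrix.cons_val_zero, Fin.zero_eta]
    field_simp
  · refine (sPatch_apply_castSucc 1 _ τ _ 1).trans ?_
    simp only [pu, Matrix.cons_val_one, Matrix.cons_val_fin_one, Fin.mk_one]
    field_simp
    ring
  · exact (sPatch_apply_last 1 _ τ _).trans (by simp; linarith)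

section Psi

variable {α u : ℝ} (σ : Equiv.Perm (Fin 3))

lemma psiPt_apply_zero : psiPt α u σ (σ 0) = α * u := sPatch_apply_castSucc 1 α σ (pu u) 0

lemma psiPt_apply_one : psiPt α u σ (σ 1) = α * (1 - u) := sPatch_apply_castSucc 1 α σ (pu u) 1

lemma psiPt_apply_two : psiPt α u σ (σ 2) = 1 - α := sPatch_apply_last 1 α σ (pu u)

lemma psiPt_mem (hα : α ∈ Set.Ioo (0 : ℝ) 1) (hu : u ∈ Set.Ioo (0 : ℝ) 1) :
    psiPt α u σ ∈ Psim 2 := by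
  obtain ⟨hα0, hα1⟩ := hα
  obtain ⟨hu0, hu1⟩ := hu
  refine ⟨fun I => ?_, ?_⟩
  · obtain ⟨j, rfl⟩ := σ.surjective I
    match j with
    | 0 => rw [psiPt_apply_zero]; exact ⟨by positivity, by nlinarith⟩
    | 1 => rw [psiPt_apply_one]; exact ⟨by nlinarith, by nlinarith⟩
    | 2 => rw [psiPt_apply_two]; exact ⟨by linarith, by linarith⟩
  · rw [sum_fin_three_perm σ, psiPt_apply_zero, psiPt_apply_one, psiPt_apply_two]
    ring

end Psi

def edgeWeight
    (A : (n : ℕ) → (Fin (n + 1) → ℝ) → (Fin (n + 1) → ℝ) → (Fin (n + 1) → ℝ) → ℝ)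
    (x y : ℝ) : ℝ :=
  A 1 (pu (x / (x + y))) (edgeVec 0 1) (edgeVec 0 1) / (x + y) ^ 2

section Invariant

variable {A : (n : ℕ) → (Fin (n + 1) → ℝ) → (Fin (n + 1) → ℝ) → (Fin (n + 1) → ℝ) → ℝ}
  (hsymm : SymmTF A) (hinv : InvariantSP A)
include hsymm hinv

lemma A2_edgeVec {q : Fin 3 → ℝ} (hq : q ∈ Psim 2) (τ : Equiv.Perm (Fin 3)) :
    A 2 q (edgeVec (τ 0) (τ 1)) (edgeVec (τ 0) (τ 1)) = edgeWeight A (q (τ 0)) (q (τ 1)) := by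
  rw [edgeWeight]
  set s := q (τ 0) + q (τ 1)
  have hsum := hq.2
  rw [sum_fin_three_perm τ] at hsum
  have h0 := hq.1 (τ 0)
  have h1 := hq.1 (τ 1)
  have h2 := hq.1 (τ 2)
  have hs : s ∈ Set.Ioo (0 : ℝ) 1 := ⟨by linarith [h0.1, h1.1], by linarith [h2.1]⟩
  have hu : q (τ 0) / s ∈ Set.Ioo (0 : ℝ) 1 :=
    ⟨div_pos h0.1 hs.1, (div_lt_one hs.1).2 (by linarith [h1.1])⟩
  have hX : s⁻¹ • edgeVec (0 : Fin 2) 1 ∈ Tang 1 := by simp [Tang, edgeVec]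
  have hpull : A 2 q (edgeVec (τ 0) (τ 1)) (edgeVec (τ 0) (τ 1)) =
      A 1 (pu (q (τ 0) / s)) (s⁻¹ • edgeVec 0 1) (s⁻¹ • edgeVec 0 1) := by
    have h := hinv 1 one_pos s hs τ _ (pu_mem hu) _ hX _ hX
    rwa [sPatch_pu_eq hq τ, sPatchD_smul, sPatchD_edgeVec, smul_smul, inv_mul_cancel₀ hs.1.ne',
      one_smul] at h
  rw [hpull, (hsymm 1 one_pos _ (pu_mem hu)).map_smul_smul]
  field_simp

lemma edgeWeight_comm {x y : ℝ} (hx : 0 < x) (hy : 0 < y) (hxy : x + y < 1) :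
    edgeWeight A x y = edgeWeight A y x := by
  have hq : ![x, y, 1 - x - y] ∈ Psim 2 := by
    refine ⟨fun i => ?_, by simp [Fin.sum_univ_three]⟩
    fin_cases i <;> simp <;> constructor <;> linarith
  have hxy := A2_edgeVec hsymm hinv hq 1
  have hyx := A2_edgeVec hsymm hinv hq (Equiv.swap 0 1)
  rw [Equiv.swap_apply_left, Equiv.swap_apply_right, edgeVec_swap,
    (hsymm 2 two_pos _ hq).map_smul_smul] at hyx
  simp only [Equiv.Perm.coe_one, id_eq, Matrix.cons_val_zero, Matrix.cons_val_one, mul_neg,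
    mul_one, neg_neg, one_mul] at hxy hyx
  linarith

lemma A2_self_of_mem_Esub {q W : Fin 3 → ℝ} (hq : q ∈ Psim 2) (τ : Equiv.Perm (Fin 3))
    (hW : W ∈ Esub (τ 2)) :
    A 2 q W W = W (τ 0) ^ 2 * edgeWeight A (q (τ 0)) (q (τ 1)) := by
  conv_lhs => rw [eq_smul_edgeVec_of_mem_Esub τ hW]
  rw [(hsymm 2 two_pos q hq).map_smul_smul, A2_edgeVec hsymm hinv hq τ, sq]

lemma A2_psiPt_apply_self {σ : Equiv.Perm (Fin 3)} {α u : ℝ} (hα : α ∈ Set.Ioo (0 : ℝ) 1)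
    (hu : u ∈ Set.Ioo (0 : ℝ) 1) {W1 W2 : Fin 3 → ℝ} (hW1 : W1 ∈ Esub (σ 0))
    (hW2 : W2 ∈ Esub (σ 1)) (hW3 : W1 + W2 ∈ Esub (σ 2)) :
    A 2 (psiPt α u σ) (W1 + W2) (W1 + W2) =
        W2 (σ 0) ^ 2 * edgeWeight A (α * u) (α * (1 - u)) ∧
      A 2 (psiPt α u σ) W1 W1 = W2 (σ 0) ^ 2 * edgeWeight A (1 - α) (α * (1 - u)) ∧
      A 2 (psiPt α u σ) W2 W2 = W2 (σ 0) ^ 2 * edgeWeight A (α * u) (1 - α) := by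
  have hr : W1 (σ 2) = W2 (σ 0) := by
    have h2 := hW2.1
    rw [sum_fin_three_perm σ, hW2.2] at h2
    linarith [hW3.2, show (W1 + W2) (σ 2) = W1 (σ 2) + W2 (σ 2) from rfl]
  have hq := psiPt_mem σ hα hu
  refine ⟨?_, ?_, ?_⟩
  · rw [A2_self_of_mem_Esub hsymm hinv hq σ hW3, Pi.add_apply, hW1.2, zero_add,
      psiPt_apply_zero, psiPt_apply_one]
  · have h := A2_self_of_mem_Esub hsymm hinv hq (σ * Equiv.swap 0 2) (by simpa using hW1)
    simpa [Equiv.swap_apply_of_ne_of_ne, hr, psiPt_apply_two, psiPt_apply_one] using h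
  · have h := A2_self_of_mem_Esub hsymm hinv hq (σ * Equiv.swap 1 2) (by simpa using hW2)
    simpa [Equiv.swap_apply_of_ne_of_ne, psiPt_apply_zero, psiPt_apply_two] using h

end Invariant

/-- For a family of symmetric `(0,2)`-tensor fields invariant under scalar
patched Markov embeddings:
`A_2(W_{σ(3)}, W_{σ(1)})_{ψ_u^σ(α)} = A_2(W_{σ(3)}, W_{σ(2)})_{ψ_{1-u}^σ(α)}`. -/
theorem A2_psi_symmetry
    (A : (n : ℕ) → (Fin (n + 1) → ℝ) → (Fin (n + 1) → ℝ) → (Fin (n + 1) → ℝ) → ℝ)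
    (hsymm : SymmTF A) (hinv : InvariantSP A) :
    ∀ σ : Equiv.Perm (Fin 3), ∀ α ∈ Set.Ioo (0 : ℝ) 1, ∀ u ∈ Set.Ioo (0 : ℝ) 1,
      ∀ W1 W2 W3 : Fin 3 → ℝ, W1 ∈ Esub (σ 0) → W2 ∈ Esub (σ 1) → W3 ∈ Esub (σ 2) →
        W3 = W1 + W2 →
        A 2 (psiPt α u σ) W3 W1 = A 2 (psiPt α (1 - u) σ) W3 W2 := by
  intro σ α hα u hu W1 W2 W3 hW1 hW2 hW3 hW
  subst hW
  have hu' : 1 - u ∈ Set.Ioo (0 : ℝ) 1 := ⟨by linarith [hu.2], by linarith [hu.1]⟩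
  obtain ⟨h3, h1, h2⟩ := A2_psiPt_apply_self hsymm hinv hα hu hW1 hW2 hW3
  obtain ⟨h3', h1', h2'⟩ := A2_psiPt_apply_self hsymm hinv hα hu' hW1 hW2 hW3
  have ha : 0 < α * u := mul_pos hα.1 hu.1
  have hb : 0 < α * (1 - u) := mul_pos hα.1 hu'.1
  have hc : 0 < 1 - α := sub_pos.2 hα.2
  rw [sub_sub_cancel, edgeWeight_comm hsymm hinv hb ha (by linarith)] at h3'
  rw [sub_sub_cancel, edgeWeight_comm hsymm hinv hc ha (by linarith)] at h1'
  rw [edgeWeight_comm hsymm hinv hb hc (by linarith)] at h2'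
  have hpol := (hsymm 2 two_pos _ (psiPt_mem σ hα hu)).polarization W1 W2
  have hpol' := (hsymm 2 two_pos _ (psiPt_mem σ hα hu')).polarization W2 W1
  rw [add_comm W2 W1] at hpol'
  linarith
end
end
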